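/- arXiv:1210.5363 — 4 statements merged into one kernel-verified Lean document; each statement's English description precedes it below -/
import Mathlib

section
/- Let G be a finite bipartite graph with bipartition (X, Y), let w ∈ Y, and let G' = G − w be the graph obtained from G by deleting w. Then 𝔐(G) ∩ X ⊇ 𝔐(G') ∩ X and 𝔐(G) ∩ (Y ∖ {w}) ⊆ 𝔐(G') ∩ Y; that is, every vertex of X covered by every maximum matching of G' is covered by every maximum matching of G, and every vertex of Y ∖ {w} covered by every maximum matching of G is covered by every maximum matching of G'. -/
/-- A digraph (given by its arc relation) is semi-complete if it is simple (no loops;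
multiple arcs are impossible in this encoding) and any two distinct vertices are
joined by an arc in at least one direction. -/
def SemiComplete {V : Type*} (E : V → V → Prop) : Prop :=
  (∀ v, ¬ E v v) ∧ ∀ v w : V, v ≠ w → E v w ∨ E w v

/-- The outdegree of a vertex: the number of its outneighbours. -/
noncomputable def outdeg {V : Type*} (E : V → V → Prop) (v : V) : ℕ :=
  {w | E v w}.ncard

/-- A directed path, encoded as a nonempty list of pairwise distinct vertices in which
consecutive vertices are joined by arcs. -/
def IsDipath {V : Type*} (E : V → V → Prop) (p : List V) : Prop :=
  p ≠ [] ∧ p.Nodup ∧ p.Chain' E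

/-- A directed path from `v` to `w`. -/
def PathFrom {V : Type*} (E : V → V → Prop) (v w : V) (p : List V) : Prop :=
  IsDipath E p ∧ p.head? = some v ∧ p.getLast? = some w

/-- The length of a path (its number of arcs). -/
def pathLen {V : Type*} (p : List V) : ℕ := p.length - 1

/-- The internal vertices of a path: all vertices except the first and the last one. -/
def internals {V : Type*} (p : List V) : List V := (p.drop 1).dropLast

/-- The arcs of a path. -/
def arcsOf {V : Type*} (p : List V) : List (V × V) := p.zip (p.drop 1)

/-- A `(k,d)`-short jungle: a set `X` of at least `k` vertices such that for every ordered
pair of distinct vertices `v, w ∈ X` there are `k` pairwise distinct paths from `v` to `w`,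
each of length at most `d`, that are pairwise internally vertex-disjoint. -/
def ShortJungle {V : Type*} (E : V → V → Prop) (k d : ℕ) (X : Set V) : Prop :=
  k ≤ X.ncard ∧ ∀ v ∈ X, ∀ w ∈ X, v ≠ w →
    ∃ P : Fin k → List V, Function.Injective P ∧
      (∀ i, PathFrom E v w (P i) ∧ pathLen (P i) ≤ d) ∧
      (∀ i j, i ≠ j → ∀ z ∈ internals (P i), z ∉ internals (P j))

/-- A `(k,d)`-short immersion jungle: as a short jungle, but with the `k` paths required
to be pairwise arc-disjoint instead of internally vertex-disjoint. -/
def ShortImmersionJungle {V : Type*} (E : V → V → Prop) (k d : ℕ) (X : Set V) : Prop :=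
  k ≤ X.ncard ∧ ∀ v ∈ X, ∀ w ∈ X, v ≠ w →
    ∃ P : Fin k → List V, Function.Injective P ∧
      (∀ i, PathFrom E v w (P i) ∧ pathLen (P i) ≤ d) ∧
      (∀ i j, i ≠ j → ∀ a ∈ arcsOf (P i), a ∉ arcsOf (P j))

/-- `H` (arc relation `Eh`) is topologically contained in `G` (arc relation `Eg`):
there is an injective map `η` on vertices and, for every arc `(u,v)` of `H`, a directed
path in `G` from `η u` to `η v`, these paths being pairwise internally vertex-disjoint
with no internal vertex in the image of `η`. -/
def TopContain {W V : Type*} (Eh : W → W → Prop) (Eg : V → V → Prop) : Prop :=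
  ∃ (η : W → V) (P : W → W → List V), Function.Injective η ∧
    (∀ u v : W, Eh u v → PathFrom Eg (η u) (η v) (P u v)) ∧
    (∀ u v : W, Eh u v → ∀ z ∈ internals (P u v), z ∉ Set.range η) ∧
    (∀ u v u' v' : W, Eh u v → Eh u' v' → (u, v) ≠ (u', v') →
      ∀ z ∈ internals (P u v), z ∉ internals (P u' v'))

/-- `H` (arc relation `Eh`) is immersed in `G` (arc relation `Eg`): there is an injective
map `η` on vertices and, for every arc `(u,v)` of `H`, a directed path in `G` from `η u`
to `η v`, these paths being pairwise arc-disjoint. -/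
def Immerses {W V : Type*} (Eh : W → W → Prop) (Eg : V → V → Prop) : Prop :=
  ∃ (η : W → V) (P : W → W → List V), Function.Injective η ∧
    (∀ u v : W, Eh u v → PathFrom Eg (η u) (η v) (P u v)) ∧
    (∀ u v u' v' : W, Eh u v → Eh u' v' → (u, v) ≠ (u', v') →
      ∀ a ∈ arcsOf (P u v), a ∉ arcsOf (P u' v'))

/-- A path decomposition of the digraph with arc relation `E`, with bags `Bs 0, …, Bs (r-1)`. -/
def IsPathDecomp {V : Type*} {r : ℕ} (E : V → V → Prop) (Bs : Fin r → Set V) : Prop :=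
  (⋃ i, Bs i) = Set.univ ∧
  (∀ i j l : Fin r, i < j → j < l → Bs i ∩ Bs l ⊆ Bs j) ∧
  (∀ u v : V, E u v →
    (∃ i, u ∈ Bs i ∧ v ∈ Bs i) ∨ ∃ i j : Fin r, j < i ∧ u ∈ Bs i ∧ v ∈ Bs j)

/-- The pathwidth of a digraph: the least `p` admitting a path decomposition all of whose
bags have size at most `p + 1`. -/
noncomputable def pathwidth {V : Type*} (E : V → V → Prop) : ℕ :=
  sInf {p | ∃ (r : ℕ) (Bs : Fin r → Set V), IsPathDecomp E Bs ∧ ∀ i, (Bs i).ncard - 1 ≤ p}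

/-- A separation of a digraph: a pair `(A,B)` covering all vertices with no arc from
`A \ B` to `B \ A`. -/
def IsSeparation {V : Type*} (E : V → V → Prop) (A B : Set V) : Prop :=
  A ∪ B = Set.univ ∧ ∀ v ∈ A \ B, ∀ w ∈ B \ A, ¬ E v w

/-- A separation chain `((A 0, B 0), …, (A r, B r))`. -/
def IsSepChain {V : Type*} {r : ℕ} (E : V → V → Prop) (A B : Fin (r + 1) → Set V) : Prop :=
  A 0 = ∅ ∧ B 0 = Set.univ ∧ A (Fin.last r) = Set.univ ∧ B (Fin.last r) = ∅ ∧
  (∀ i, IsSeparation E (A i) (B i)) ∧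
  (∀ i j : Fin (r + 1), i ≤ j → A i ⊆ A j ∧ B j ⊆ B i)

/-- A `(k,ℓ)`-degree tangle: at least `k` vertices whose outdegrees pairwise differ
by at most `ℓ`. -/
def DegreeTangle {V : Type*} (E : V → V → Prop) (k ℓ : ℕ) (X : Set V) : Prop :=
  k ≤ X.ncard ∧ ∀ v ∈ X, ∀ w ∈ X, outdeg E v ≤ outdeg E w + ℓ

/-- A `(k,ℓ)`-matching tangle: disjoint sets `X`, `Y` of size `k` with a matching from `X`
to `Y`, where every vertex of `Y` has outdegree more than `ℓ` larger than every vertex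
of `X`. -/
def MatchingTangle {V : Type*} (E : V → V → Prop) (k ℓ : ℕ) (X Y : Set V) : Prop :=
  Disjoint X Y ∧ X.ncard = k ∧ Y.ncard = k ∧
  (∃ f : V → V, Set.BijOn f X Y ∧ ∀ v ∈ X, E v (f v)) ∧
  (∀ v ∈ X, ∀ w ∈ Y, outdeg E v + ℓ < outdeg E w)

/-- A `k`-backward tangle: a partition `(X,Y)` of the vertex set with at least `k` arcs
from `X` to `Y`, and every outdegree in `Y` at least every outdegree in `X`. -/
def BackwardTangle {V : Type*} (E : V → V → Prop) (k : ℕ) (X Y : Set V) : Prop :=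
  X ∪ Y = Set.univ ∧ Disjoint X Y ∧
  k ≤ {p : V × V | p.1 ∈ X ∧ p.2 ∈ Y ∧ E p.1 p.2}.ncard ∧
  (∀ v ∈ X, ∀ w ∈ Y, outdeg E v ≤ outdeg E w)

/-- The width of an ordering of the vertices (given as a bijection from `Fin n`):
the maximum, over prefixes, of the number of arcs leaving the prefix forward. -/
noncomputable def orderWidth {V : Type*} [Fintype V] (E : V → V → Prop)
    (e : Fin (Fintype.card V) ≃ V) : ℕ :=
  ⨆ α : Fin (Fintype.card V + 1),
    {p : V × V | ((e.symm p.1 : ℕ) < (α : ℕ)) ∧ ¬ ((e.symm p.2 : ℕ) < (α : ℕ)) ∧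
      E p.1 p.2}.ncard

/-- The cutwidth of a digraph: the minimum width over all orderings of the vertices. -/
noncomputable def cutwidth {V : Type*} [Fintype V] (E : V → V → Prop) : ℕ :=
  ⨅ e : Fin (Fintype.card V) ≃ V, orderWidth E e

/-- `(X,Y)` is a bipartition of the simple graph `G`. -/
def IsBipartition {V : Type*} (G : SimpleGraph V) (X Y : Set V) : Prop :=
  X ∪ Y = Set.univ ∧ Disjoint X Y ∧
  ∀ u v : V, G.Adj u v → (u ∈ X ∧ v ∈ Y) ∨ (u ∈ Y ∧ v ∈ X)

/-- A matching of `G`: a set of edges of `G` that are pairwise vertex-disjoint. -/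
def IsMatching {V : Type*} (G : SimpleGraph V) (M : Set (Sym2 V)) : Prop :=
  M ⊆ G.edgeSet ∧ ∀ e ∈ M, ∀ f ∈ M, e ≠ f → ∀ v : V, v ∈ e → v ∉ f

/-- A maximum matching of `G`. -/
def IsMaxMatching {V : Type*} [Fintype V] (G : SimpleGraph V) (M : Set (Sym2 V)) : Prop :=
  IsMatching G M ∧ ∀ N : Set (Sym2 V), IsMatching G N → N.ncard ≤ M.ncard

/-- A vertex is covered by a matching if it is an endpoint of one of its edges. -/
def CoveredBy {V : Type*} (M : Set (Sym2 V)) (v : V) : Prop := ∃ e ∈ M, v ∈ e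

/-- A vertex is covered by every maximum matching of `G`. -/
def CoveredByAllMax {V : Type*} [Fintype V] (G : SimpleGraph V) (v : V) : Prop :=
  ∀ M : Set (Sym2 V), IsMaxMatching G M → CoveredBy M v

/-- Deletion of the vertex `w` from a simple graph (keeping the vertex type). -/
def deleteVert {V : Type*} (G : SimpleGraph V) (w : V) : SimpleGraph V where
  Adj x y := G.Adj x y ∧ x ≠ w ∧ y ≠ w
  symm := ⟨fun _ _ h => ⟨h.1.symm, h.2.2, h.2.1⟩⟩
  loopless := ⟨fun x h => G.loopless.irrefl x h.1⟩

/-- An `M`-alternating path from `u` to `v`: a (possibly trivial) path starting at `u` and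
ending at `v` whose edges alternate between non-matching and matching edges, beginning
with a non-matching edge. -/
def AltPathFrom {V : Type*} (G : SimpleGraph V) (M : Set (Sym2 V)) (u v : V) : Prop :=
  ∃ p : List V, p ≠ [] ∧ p.Nodup ∧ p.Chain' G.Adj ∧
    p.head? = some u ∧ p.getLast? = some v ∧
    ∀ i : ℕ, (h : i + 1 < p.length) →
      (s(p.get ⟨i, Nat.lt_of_succ_lt h⟩, p.get ⟨i + 1, h⟩) ∈ M ↔ i % 2 = 1)

/-!
Both inclusions follow from one exchange argument. Let `v` be missed by a maximum matching `B`
(of `G` for the first inclusion, of `G - w` for the second) and let `A` be a maximum matching of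
the other graph. Follow the path from `v` whose edges alternate between `A` and `B`, starting with
`A`, until the matching due next misses its last vertex. If the path has odd length, exchanging
it along `B` augments `B`; so it has even length, and exchanging it along `A` gives a maximum
matching missing `v`. Where the exchanged matching has to live in `G - w`, the path avoids `w`:
its inner vertices are covered by the matching of `G - w`, and the relevant end vertex lies in
`X` by parity.
-/

section MatchingExchange

open Set

variable {V : Type*} {G H : SimpleGraph V} {M A B : Set (Sym2 V)} {X Y : Set V}
  {x : ℕ → V} {L k i n m : ℕ} {v w : V}

theorem IsMatching.eq_of_mem (hM : IsMatching G M) {e f : Sym2 V} (he : e ∈ M) (hf : f ∈ M)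
    {z : V} (hze : z ∈ e) (hzf : z ∈ f) : e = f := by
  by_contra hne
  exact hM.2 e he f hf hne z hze hzf

theorem IsMatching.mono (hM : IsMatching G M) (hGH : G ≤ H) : IsMatching H M :=
  ⟨hM.1.trans (SimpleGraph.edgeSet_mono hGH), hM.2⟩

theorem IsMatching.ne_of_mk_mem (hM : IsMatching G M) {a b : V} (h : s(a, b) ∈ M) : a ≠ b :=
  G.ne_of_adj (hM.1 h)

theorem exists_isMaxMatching [Fintype V] (G : SimpleGraph V) : ∃ M, IsMaxMatching G M := by
  obtain ⟨M, hM, hmax⟩ := exists_max_image {M | IsMatching G M} ncard (toFinite _)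
    ⟨∅, empty_subset _, by simp⟩
  exact ⟨M, hM, hmax⟩

theorem deleteVert_le : deleteVert G w ≤ G := fun _ _ h => h.1

theorem notMem_of_mem_edgeSet_deleteVert {e : Sym2 V} (he : e ∈ (deleteVert G w).edgeSet) :
    w ∉ e := by
  induction e using Sym2.ind with
  | _ a b =>
    obtain ⟨-, ha, hb⟩ := he
    rw [Sym2.mem_iff]
    rintro (rfl | rfl) <;> contradiction

theorem IsBipartition.symm (hB : IsBipartition G X Y) : IsBipartition G Y X :=
  ⟨union_comm X Y ▸ hB.1, hB.2.1.symm, fun u v h => (hB.2.2 u v h).symm⟩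

theorem IsBipartition.mem_left_iff (hB : IsBipartition G X Y) (h0 : x 0 ∈ X)
    (hadj : ∀ n < L, G.Adj (x n) (x (n + 1))) : ∀ n ≤ L, (x n ∈ X ↔ n % 2 = 0) := by
  intro n hn
  induction n with
  | zero => simpa using h0
  | succ n ih =>
    have ih := ih (by omega)
    rcases hB.2.2 _ _ (hadj n (by omega)) with ⟨hX, hY⟩ | ⟨hY, hX⟩
    · have : n % 2 = 0 := ih.1 hX
      exact ⟨fun h => absurd hY (disjoint_left.1 hB.2.1 h), by omega⟩
    · have : n % 2 ≠ 0 := fun h => disjoint_left.1 hB.2.1 (ih.2 h) hY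
      exact ⟨fun _ => by omega, fun _ => hX⟩

def pathEdge (x : ℕ → V) (n : ℕ) : Sym2 V := s(x n, x (n + 1))

def altEdges (x : ℕ → V) (L k : ℕ) : Set (Sym2 V) := pathEdge x '' {n | n < L ∧ n % 2 = k}

theorem mem_pathEdge {z : V} : z ∈ pathEdge x n ↔ z = x n ∨ z = x (n + 1) := Sym2.mem_iff

theorem pathEdge_mem_altEdges (hn : n < L) (hk : n % 2 = k) : pathEdge x n ∈ altEdges x L k :=
  ⟨n, ⟨hn, hk⟩, rfl⟩

theorem eq_or_eq_succ_of_mem_pathEdge (hx : InjOn x (Iic L)) (hi : i ≤ L) (hn : n < L)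
    (h : x i ∈ pathEdge x n) : i = n ∨ i = n + 1 := by
  rcases mem_pathEdge.1 h with h | h
  · exact .inl (hx (mem_Iic.2 hi) (mem_Iic.2 hn.le) h)
  · exact .inr (hx (mem_Iic.2 hi) (mem_Iic.2 hn) h)

theorem pathEdge_injOn (hx : InjOn x (Iic L)) : InjOn (pathEdge x) (Iio L) := by
  intro n hn m hm h
  have h₁ := eq_or_eq_succ_of_mem_pathEdge hx (le_of_lt hn) hm (h ▸ Sym2.mem_mk_left _ _)
  have h₂ := eq_or_eq_succ_of_mem_pathEdge hx hn hm (h ▸ Sym2.mem_mk_right _ _)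
  omega

theorem eq_or_consecutive_of_mem_pathEdge (hx : InjOn x (Iic L)) (hn : n < L) (hm : m < L) {z : V}
    (hzn : z ∈ pathEdge x n) (hzm : z ∈ pathEdge x m) : n = m ∨ n + 1 = m ∨ m + 1 = n := by
  rcases mem_pathEdge.1 hzn with rfl | rfl
  · have := eq_or_eq_succ_of_mem_pathEdge hx hn.le hm hzm
    omega
  · have := eq_or_eq_succ_of_mem_pathEdge hx hn hm hzm
    omega

theorem ncard_lt_mod_two_eq (L : ℕ) (hk : k < 2) :
    {n | n < L ∧ n % 2 = k}.ncard = (L + 1 - k) / 2 := by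
  induction L with
  | zero => simp only [Nat.not_lt_zero, false_and, ofPred_false, ncard_empty]; omega
  | succ L ih =>
    by_cases hL : L % 2 = k
    · have : {n | n < L + 1 ∧ n % 2 = k} = insert L {n | n < L ∧ n % 2 = k} := by
        ext n; simp only [mem_ofPred_eq, mem_insert_iff]; omega
      rw [this, ncard_insert_of_notMem (by simp) ((finite_lt_nat L).subset fun n hn => hn.1), ih]
      omega
    · have : {n | n < L + 1 ∧ n % 2 = k} = {n | n < L ∧ n % 2 = k} := by
        ext n; simp only [mem_ofPred_eq]; omega
      rw [this, ih]
      omega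

theorem ncard_altEdges (hx : InjOn x (Iic L)) (hk : k < 2) :
    (altEdges x L k).ncard = (L + 1 - k) / 2 := by
  rw [altEdges, ((pathEdge_injOn hx).mono fun n hn => mem_Iio.2 hn.1).ncard_image,
    ncard_lt_mod_two_eq L hk]

/-- An inner vertex of the path lies on path edges of both parities; an end vertex lies on
one of parity `k` unless its position rules this out. -/
theorem exists_apply_mem_pathEdge (hi : i ≤ L) (hk : k < 2) (h0 : 0 < i ∨ i % 2 = k)
    (hL : i < L ∨ i % 2 ≠ k) : ∃ n < L, n % 2 = k ∧ x i ∈ pathEdge x n := by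
  by_cases h : i % 2 = k
  · exact ⟨i, by omega, h, Sym2.mem_mk_left _ _⟩
  · obtain ⟨n, rfl⟩ : ∃ n, i = n + 1 := ⟨i - 1, by omega⟩
    exact ⟨n, by omega, by omega, Sym2.mem_mk_right _ _⟩

theorem eq_pathEdge_of_mem (hM : IsMatching G M) (hk : k < 2) (hsub : altEdges x L k ⊆ M)
    (hi : i ≤ L) (h0 : 0 < i ∨ i % 2 = k) (hL : i < L ∨ i % 2 ≠ k) {e : Sym2 V}
    (he : e ∈ M) (hxe : x i ∈ e) : ∃ n < L, n % 2 = k ∧ e = pathEdge x n := by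
  obtain ⟨n, hn, hnk, hxn⟩ := exists_apply_mem_pathEdge hi hk h0 hL
  exact ⟨n, hn, hnk, hM.eq_of_mem he (hsub (pathEdge_mem_altEdges hn hnk)) hxe hxn⟩

theorem apply_ne_of_forall_notMem_altEdges (hk : k < 2) (hw : ∀ e ∈ altEdges x L k, w ∉ e)
    (h0 : x 0 ≠ w) (hL : x L ≠ w) : ∀ i ≤ L, x i ≠ w := by
  intro i hi hxi
  rcases Nat.eq_zero_or_pos i with rfl | hpos
  · exact h0 hxi
  rcases hi.lt_or_eq with hlt | rfl
  · obtain ⟨n, hn, hnk, hxn⟩ := exists_apply_mem_pathEdge hi hk (.inl hpos) (.inl hlt)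
    exact hw _ (pathEdge_mem_altEdges hn hnk) (hxi ▸ hxn)
  · exact hL hxi

theorem altEdges_subset_deleteVert {j : ℕ} (hE : altEdges x L j ⊆ G.edgeSet)
    (hw : ∀ i ≤ L, x i ≠ w) : altEdges x L j ⊆ (deleteVert G w).edgeSet := by
  rintro _ ⟨n, ⟨hn, hnj⟩, rfl⟩
  exact ⟨hE (pathEdge_mem_altEdges hn hnj), hw n (by omega), hw (n + 1) hn⟩

/-- `M Δ P` for the path `P = x 0, …, x L` whose edges in `M` are those of parity `k`. -/
def exchange (M : Set (Sym2 V)) (x : ℕ → V) (L k : ℕ) : Set (Sym2 V) :=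
  (M \ altEdges x L k) ∪ altEdges x L (1 - k)

/-- The conditions making `exchange M x L k` a matching: an end vertex of the path may be
covered by `M` only through a path edge. -/
structure IsExchangePath (M : Set (Sym2 V)) (x : ℕ → V) (L k : ℕ) : Prop where
  injOn : InjOn x (Iic L)
  parity_lt : k < 2
  altEdges_subset : altEdges x L k ⊆ M
  start : CoveredBy M (x 0) → k = 0
  finish : CoveredBy M (x L) → L % 2 ≠ k

namespace IsExchangePath

theorem mem_altEdges (hP : IsExchangePath M x L k) (hM : IsMatching G M) (hi : i ≤ L)
    {e : Sym2 V} (he : e ∈ M) (hxe : x i ∈ e) : e ∈ altEdges x L k := by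
  have h0 : 0 < i ∨ i % 2 = k := by
    rcases Nat.eq_zero_or_pos i with rfl | h
    · exact .inr (hP.start ⟨e, he, hxe⟩).symm
    · exact .inl h
  have hL : i < L ∨ i % 2 ≠ k := by
    rcases hi.lt_or_eq with h | rfl
    · exact .inl h
    · exact .inr (hP.finish ⟨e, he, hxe⟩)
  obtain ⟨n, hn, hnk, rfl⟩ :=
    eq_pathEdge_of_mem hM hP.parity_lt hP.altEdges_subset hi h0 hL he hxe
  exact pathEdge_mem_altEdges hn hnk

theorem mem_altEdges_of_mem_pathEdge (hP : IsExchangePath M x L k) (hM : IsMatching G M)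
    {e : Sym2 V} (he : e ∈ M) {z : V} (hze : z ∈ e) (hn : n < L) (hz : z ∈ pathEdge x n) :
    e ∈ altEdges x L k := by
  rcases mem_pathEdge.1 hz with rfl | rfl
  · exact hP.mem_altEdges hM hn.le he hze
  · exact hP.mem_altEdges hM hn he hze

theorem disjoint_altEdges (hP : IsExchangePath M x L k) (hM : IsMatching G M) :
    Disjoint M (altEdges x L (1 - k)) := by
  rw [disjoint_right]
  rintro _ ⟨n, ⟨hn, hnk⟩, rfl⟩ he
  obtain ⟨m, ⟨hm, hmk⟩, hmn⟩ := hP.mem_altEdges hM hn.le he (Sym2.mem_mk_left _ _)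
  have := pathEdge_injOn hP.injOn (mem_Iio.2 hm) (mem_Iio.2 hn) hmn
  have := hP.parity_lt
  omega

theorem isMatching_exchange (hP : IsExchangePath M x L k) (hM : IsMatching G M)
    (hE : altEdges x L (1 - k) ⊆ G.edgeSet) : IsMatching G (exchange M x L k) := by
  refine ⟨union_subset (sdiff_subset.trans hM.1) hE, ?_⟩
  rintro e (⟨he, he'⟩ | ⟨n, ⟨hn, hnk⟩, rfl⟩) f (⟨hf, hf'⟩ | ⟨m, ⟨hm, hmk⟩, rfl⟩) hne z hze
    hzf
  · exact hM.2 e he f hf hne z hze hzf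
  · exact he' (hP.mem_altEdges_of_mem_pathEdge hM he hze hm hzf)
  · exact hf' (hP.mem_altEdges_of_mem_pathEdge hM hf hzf hn hze)
  · have hnm : n ≠ m := fun h => hne (h ▸ rfl)
    have := eq_or_consecutive_of_mem_pathEdge hP.injOn hn hm hze hzf
    omega

theorem ncard_exchange [Finite V] (hP : IsExchangePath M x L k) (hM : IsMatching G M) :
    (exchange M x L k).ncard + (altEdges x L k).ncard =
      M.ncard + (altEdges x L (1 - k)).ncard := by
  have hdisj : Disjoint (M \ altEdges x L k) (altEdges x L (1 - k)) :=
    (hP.disjoint_altEdges hM).mono_left sdiff_subset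
  have hle := ncard_le_ncard hP.altEdges_subset
  rw [exchange, ncard_union_eq hdisj, ncard_sdiff hP.altEdges_subset]
  omega

theorem not_coveredBy_exchange (hP : IsExchangePath M x L 0) (hM : IsMatching G M) :
    ¬ CoveredBy (exchange M x L 0) (x 0) := by
  rintro ⟨e, ⟨he, he'⟩ | ⟨n, ⟨hn, hnk⟩, rfl⟩, hxe⟩
  · exact he' (hP.mem_altEdges hM (Nat.zero_le L) he hxe)
  · have := eq_or_eq_succ_of_mem_pathEdge hP.injOn (Nat.zero_le L) hn hxe
    omega

end IsExchangePath

structure IsAltPath (A B : Set (Sym2 V)) (x : ℕ → V) (L : ℕ) : Prop where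
  injOn : InjOn x (Iic L)
  mem : ∀ n < L, pathEdge x n ∈ if n % 2 = 0 then A else B

namespace IsAltPath

theorem altEdges_subset (hx : IsAltPath A B x L) (j : ℕ) :
    altEdges x L (j % 2) ⊆ if j % 2 = 0 then A else B := by
  rintro _ ⟨n, ⟨hn, hnj⟩, rfl⟩
  rw [← hnj]
  exact hx.mem n hn

theorem altEdges_zero_subset (hx : IsAltPath A B x L) : altEdges x L 0 ⊆ A :=
  hx.altEdges_subset 0

theorem altEdges_one_subset (hx : IsAltPath A B x L) : altEdges x L 1 ⊆ B :=
  hx.altEdges_subset 1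

theorem adj (hx : IsAltPath A B x L) (hA : IsMatching G A) (hB : IsMatching G B) :
    ∀ n < L, G.Adj (x n) (x (n + 1)) := by
  intro n hn
  have h := hx.mem n hn
  split at h
  · exact hA.1 h
  · exact hB.1 h

theorem isExchangePath_left (hx : IsAltPath A B x L)
    (hend : ¬ CoveredBy (if L % 2 = 0 then A else B) (x L)) : IsExchangePath A x L 0 where
  injOn := hx.injOn
  parity_lt := by norm_num
  altEdges_subset := hx.altEdges_zero_subset
  start _ := rfl
  finish h hL := hend (by rwa [if_pos hL])

theorem isExchangePath_right (hx : IsAltPath A B x L) (hv : ¬ CoveredBy B (x 0))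
    (hend : ¬ CoveredBy (if L % 2 = 0 then A else B) (x L)) : IsExchangePath B x L 1 where
  injOn := hx.injOn
  parity_lt := by norm_num
  altEdges_subset := hx.altEdges_one_subset
  start h := absurd h hv
  finish h hL := hend (by rwa [if_neg (by omega)])

theorem extend (hx : IsAltPath A B x L) (hA : IsMatching G A) (hB : IsMatching G B)
    (hv : ¬ CoveredBy B (x 0)) {y : V} (hy : s(x L, y) ∈ if L % 2 = 0 then A else B) :
    IsAltPath A B (Function.update x (L + 1) y) (L + 1) := by
  set C := if L % 2 = 0 then A else B
  have hC : IsMatching G C := by unfold C; split <;> assumption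
  -- the `C`-edge at an earlier path vertex is a path edge, so it cannot contain `x L`
  have hy_new : y ∉ x '' Iic L := by
    rintro ⟨i, hi, rfl⟩
    have hi : i ≤ L := hi
    have hiL : i ≠ L := fun h => hC.ne_of_mk_mem hy (h ▸ rfl)
    have hsub : altEdges x L (L % 2) ⊆ C := hx.altEdges_subset L
    have h0 : 0 < i ∨ i % 2 = L % 2 := by
      rcases Nat.eq_zero_or_pos i with rfl | h
      · by_contra h0
        have hC' : C = B := if_neg (by omega)
        exact hv ⟨_, hC' ▸ hy, Sym2.mem_mk_right _ _⟩
      · exact .inl h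
    obtain ⟨n, hn, hnL, he⟩ := eq_pathEdge_of_mem hC (Nat.mod_lt L two_pos) hsub hi h0
      (.inl (by omega)) hy (Sym2.mem_mk_right _ _)
    have := eq_or_eq_succ_of_mem_pathEdge hx.injOn le_rfl hn (he ▸ Sym2.mem_mk_left _ _)
    omega
  have heq : EqOn (Function.update x (L + 1) y) x (Iic L) := fun i hi =>
    Function.update_of_ne (by simp only [mem_Iic] at hi; omega) _ _
  constructor
  · have : Iic (L + 1) = insert (L + 1) (Iic L) := by ext; simp; omega
    rw [this, injOn_insert (by simp), heq.image_eq, Function.update_self]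
    exact ⟨hx.injOn.congr heq.symm, hy_new⟩
  · intro n hn
    rcases Nat.lt_succ_iff_lt_or_eq.1 hn with hn | rfl
    · rw [pathEdge, heq (mem_Iic.2 hn.le), heq (mem_Iic.2 hn)]
      exact hx.mem n hn
    · rw [pathEdge, heq (mem_Iic.2 le_rfl), Function.update_self]
      exact hy

theorem even_of_isMaxMatching [Fintype V] (hx : IsAltPath A B x L) (hB : IsMaxMatching H B)
    (hv : ¬ CoveredBy B (x 0)) (hend : ¬ CoveredBy (if L % 2 = 0 then A else B) (x L))
    (hE : L % 2 = 1 → altEdges x L 0 ⊆ H.edgeSet) : L % 2 = 0 := by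
  by_contra hodd
  have hodd : L % 2 = 1 := by omega
  have hP := hx.isExchangePath_right hv hend
  have hcard := hP.ncard_exchange hB.1
  rw [ncard_altEdges hx.injOn (by norm_num), ncard_altEdges hx.injOn (by norm_num)] at hcard
  have := hB.2 _ (hP.isMatching_exchange hB.1 (hE hodd))
  omega

theorem isMaxMatching_exchange [Fintype V] (hx : IsAltPath A B x L) (hA : IsMaxMatching H A)
    (hend : ¬ CoveredBy (if L % 2 = 0 then A else B) (x L)) (heven : L % 2 = 0)
    (hE : altEdges x L 1 ⊆ H.edgeSet) :
    IsMaxMatching H (exchange A x L 0) ∧ ¬ CoveredBy (exchange A x L 0) (x 0) := by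
  have hP := hx.isExchangePath_left hend
  have hcard := hP.ncard_exchange hA.1
  rw [ncard_altEdges hx.injOn (by norm_num), ncard_altEdges hx.injOn (by norm_num)] at hcard
  refine ⟨⟨hP.isMatching_exchange hA.1 hE, fun N hN => ?_⟩, hP.not_coveredBy_exchange hA.1⟩
  have := hA.2 N hN
  omega

end IsAltPath

/-- If no alternating path from `v` got stuck, they could be extended forever; but their
vertices are distinct. -/
theorem exists_altPath [Finite V] (hA : IsMatching G A) (hB : IsMatching G B)
    (hv : ¬ CoveredBy B v) : ∃ L x, x 0 = v ∧ IsAltPath A B x L ∧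
      ¬ CoveredBy (if L % 2 = 0 then A else B) (x L) := by
  by_contra! hstuck
  have hlong : ∀ L, ∃ x : ℕ → V, x 0 = v ∧ IsAltPath A B x L := by
    intro L
    induction L with
    | zero => exact ⟨fun _ => v, rfl, fun _ _ _ _ _ => by simp_all, by simp⟩
    | succ L ih =>
      obtain ⟨x, hx0, hx⟩ := ih
      obtain ⟨e, he, hxe⟩ := hstuck L x hx0 hx
      rw [← Sym2.other_spec hxe] at he
      exact ⟨_, by simpa using hx0, hx.extend hA hB (hx0 ▸ hv) he⟩
  obtain ⟨x, -, hx⟩ := hlong (Nat.card V)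
  have hinj : Function.Injective fun i : Fin (Nat.card V + 1) => x i := fun i j h =>
    Fin.ext (hx.injOn (mem_Iic.2 (Nat.lt_succ_iff.1 i.2)) (mem_Iic.2 (Nat.lt_succ_iff.1 j.2)) h)
  have := Nat.card_le_card_of_injective _ hinj
  simp at this

theorem coveredByAllMax_of_deleteVert [Fintype V] (hB : IsBipartition G X Y) (hw : w ∈ Y)
    (hvX : v ∈ X) (hv : CoveredByAllMax (deleteVert G w) v) : CoveredByAllMax G v := by
  intro M hM
  by_contra hvM
  obtain ⟨N, hN⟩ := exists_isMaxMatching (deleteVert G w)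
  have hNG := hN.1.mono deleteVert_le
  obtain ⟨L, x, rfl, hx, hend⟩ := exists_altPath hNG hM.1 hvM
  have hL := hx.even_of_isMaxMatching hM hvM hend fun _ => hx.altEdges_zero_subset.trans hNG.1
  have hXL : x L ∈ X := (hB.mem_left_iff hvX (hx.adj hNG hM.1) L le_rfl).2 hL
  have havoid := apply_ne_of_forall_notMem_altEdges (k := 0) (by norm_num)
    (fun e he => notMem_of_mem_edgeSet_deleteVert (hN.1.1 (hx.altEdges_zero_subset he)))
    (hB.2.1.ne_of_mem hvX hw) (hB.2.1.ne_of_mem hXL hw)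
  obtain ⟨hmax, hncov⟩ := hx.isMaxMatching_exchange hN hend hL
    (altEdges_subset_deleteVert (hx.altEdges_one_subset.trans hM.1.1) havoid)
  exact hncov (hv _ hmax)

theorem coveredByAllMax_deleteVert [Fintype V] (hB : IsBipartition G X Y) (hw : w ∈ Y)
    (hvY : v ∈ Y) (hvw : v ≠ w) (hv : CoveredByAllMax G v) :
    CoveredByAllMax (deleteVert G w) v := by
  intro N hN
  by_contra hvN
  obtain ⟨M, hM⟩ := exists_isMaxMatching G
  have hNG := hN.1.mono deleteVert_le
  obtain ⟨L, x, rfl, hx, hend⟩ := exists_altPath hM.1 hNG hvN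
  have hL := hx.even_of_isMaxMatching hN hvN hend fun hodd => by
    have hYL : x L ∉ Y := fun h => by
      have := (hB.symm.mem_left_iff hvY (hx.adj hM.1 hNG) L le_rfl).1 h
      omega
    refine altEdges_subset_deleteVert (hx.altEdges_zero_subset.trans hM.1.1) ?_
    exact apply_ne_of_forall_notMem_altEdges (k := 1) (by norm_num)
      (fun e he => notMem_of_mem_edgeSet_deleteVert (hN.1.1 (hx.altEdges_one_subset he)))
      hvw (fun h => hYL (h ▸ hw))
  obtain ⟨hmax, hncov⟩ := hx.isMaxMatching_exchange hM hend hL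
    (hx.altEdges_one_subset.trans hNG.1)
  exact hncov (hv _ hmax)

end MatchingExchange

/-- Monotonicity of the matching selector: for `G' = G - w` with `w ∈ Y`,
`𝔐(G) ∩ X ⊇ 𝔐(G') ∩ X` and `𝔐(G) ∩ (Y \ {w}) ⊆ 𝔐(G') ∩ Y`. -/
theorem stmt_15 {V : Type*} [Fintype V] (G : SimpleGraph V) (X Y : Set V)
    (hB : IsBipartition G X Y) (w : V) (hw : w ∈ Y) :
    (∀ v ∈ X, CoveredByAllMax (deleteVert G w) v → CoveredByAllMax G v) ∧
    (∀ v ∈ Y, v ≠ w → CoveredByAllMax G v → CoveredByAllMax (deleteVert G w) v) :=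
  ⟨fun _ hvX => coveredByAllMax_of_deleteVert hB hw hvX,
    fun _ hvY hvw => coveredByAllMax_deleteVert hB hw hvY hvw⟩
end

section
/- Let G be a finite bipartite graph with bipartition (X, Y) and let M be any maximum matching of G. Let A_0 = X ∖ V(M) be the set of vertices of X not covered by M, and B_0 = Y ∖ V(M) the set of vertices of Y not covered by M. Let A be the set of vertices of X reachable from a vertex of A_0 by an M-alternating path, and B the set of vertices of Y reachable from a vertex of B_0 by an M-alternating path. Then a vertex v of G is covered by every maximum matching of G if and only if v ∉ A ∪ B. -/
/-!
If `P` is an `M`-alternating path with an even number of edges from an `M`-uncovered vertex `u`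
to `v`, swapping the edges of `P` in and out of `M`, two at a time starting at `u`, gives a
maximum matching that misses `v`. Conversely, if a maximum matching `N` misses `v`, follow edges
of `M` and `N` in turn from `v`. Each of `M` and `N` matches the vertices visited so far among
themselves, so the walk never returns to a vertex and must stop. It cannot stop at a vertex
missed by `N`, since it would then be an `N`-augmenting path; so it stops after an even number
of edges at a vertex missed by `M`, and read backwards it is the required path. In a bipartite
graph, an even number of edges means exactly that `u` and `v` lie on the same side.
-/

section AlternatingPaths

variable {V : Type*}

def Alternates (P Q : Sym2 V → Prop) : List V → Prop
  | x :: y :: l => P s(x, y) ∧ Alternates Q P (y :: l)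
  | _ => True

section Alternates

variable {P Q : Sym2 V → Prop}

lemma alternates_cons_cons {x y : V} {l : List V} :
    Alternates P Q (x :: y :: l) ↔ P s(x, y) ∧ Alternates Q P (y :: l) :=
  Iff.rfl

lemma Alternates.imp {P' Q' : Sym2 V → Prop} {p : List V}
    (hP : ∀ a ∈ p, ∀ b ∈ p, P s(a, b) → P' s(a, b))
    (hQ : ∀ a ∈ p, ∀ b ∈ p, Q s(a, b) → Q' s(a, b)) (h : Alternates P Q p) :
    Alternates P' Q' p := by
  induction p generalizing P Q P' Q' with
  | nil => trivial
  | cons x l ih =>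
    cases l with
    | nil => trivial
    | cons y l =>
      refine ⟨hP x (by simp) y (by simp) h.1, ih ?_ ?_ h.2⟩
      · exact fun a ha b hb => hQ a (List.mem_cons_of_mem x ha) b (List.mem_cons_of_mem x hb)
      · exact fun a ha b hb => hP a (List.mem_cons_of_mem x ha) b (List.mem_cons_of_mem x hb)

lemma alternates_iff_getElem {p : List V} :
    Alternates P Q p ↔
      ∀ i (h : i + 1 < p.length), (if i % 2 = 0 then P else Q) s(p[i], p[i + 1]) := by
  induction p generalizing P Q with
  | nil => simp [Alternates]
  | cons x l ih =>
    cases l with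
    | nil => simp [Alternates]
    | cons y l =>
      rw [alternates_cons_cons, ih]
      constructor
      · rintro ⟨h0, hs⟩ (_ | i) hi
        · simpa using h0
        · have := hs i (by simpa using hi)
          rcases Nat.mod_two_eq_zero_or_one i with h | h <;>
            simp_all [Nat.succ_mod_two_eq_zero_iff]
      · intro h
        refine ⟨by simpa using h 0 (by simp), fun i hi => ?_⟩
        have := h (i + 1) (by simpa using hi)
        rcases Nat.mod_two_eq_zero_or_one i with h | h <;>
          simp_all [Nat.succ_mod_two_eq_zero_iff]

lemma Alternates.of_cons_cons {x y : V} {l : List V} (h : Alternates P Q (x :: y :: l)) :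
    Alternates P Q l := by
  cases l with
  | nil => trivial
  | cons z l => exact h.2.2

lemma Alternates.exists_right_of_cons {x : V} {l : List V} (h : Alternates P Q (x :: l))
    (hl : Even l.length) : ∀ y ∈ l, ∃ y' ∈ l, Q s(y, y') := by
  match l, h, hl with
  | [], _, _ => simp
  | [_], _, hl => simp at hl
  | a :: b :: l, h, hl =>
    have ih := h.2.2.exists_right_of_cons (by simpa [Nat.even_add_one] using hl)
    rintro y (_ | ⟨_, _ | ⟨_, hy⟩⟩)
    · exact ⟨b, by simp, h.2.1⟩
    · exact ⟨a, by simp, Sym2.eq_swap ▸ h.2.1⟩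
    · obtain ⟨y', hy', hQ⟩ := ih y hy
      exact ⟨y', by simp [hy'], hQ⟩

lemma Alternates.exists_left_of_append {x : V} {l : List V} (h : Alternates P Q (l ++ [x]))
    (hl : Even l.length) : ∀ y ∈ l, ∃ y' ∈ l, P s(y, y') := by
  match l, h, hl with
  | [], _, _ => simp
  | [_], _, hl => simp at hl
  | a :: b :: l, h, hl =>
    have ih := Alternates.exists_left_of_append (x := x) (l := l) h.of_cons_cons
      (by simpa [Nat.even_add_one] using hl)
    rintro y (_ | ⟨_, _ | ⟨_, hy⟩⟩)
    · exact ⟨b, by simp, h.1⟩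
    · exact ⟨a, by simp, Sym2.eq_swap ▸ h.1⟩
    · obtain ⟨y', hy', hP⟩ := ih y hy
      exact ⟨y', by simp [hy'], hP⟩

end Alternates

lemma coveredBy_iff_exists {M : Set (Sym2 V)} {x : V} : CoveredBy M x ↔ ∃ y, s(x, y) ∈ M := by
  constructor
  · rintro ⟨e, he, hx⟩
    obtain ⟨y, rfl⟩ := Sym2.mem_iff_exists.1 hx
    exact ⟨y, he⟩
  · rintro ⟨y, h⟩
    exact ⟨_, h, Sym2.mem_mk_left x y⟩

lemma ncard_insert_of_not_coveredBy [Finite V] {M : Set (Sym2 V)} {x y : V}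
    (hx : ¬CoveredBy M x) : (insert s(x, y) M).ncard = M.ncard + 1 :=
  Set.ncard_insert_of_notMem (fun h => hx ⟨_, h, Sym2.mem_mk_left x y⟩) M.toFinite

namespace IsMatching

variable {G : SimpleGraph V} {M : Set (Sym2 V)}

lemma eq_of_mk_mem (hM : IsMatching G M) {x a b : V} (ha : s(x, a) ∈ M) (hb : s(x, b) ∈ M) :
    a = b := by
  by_contra hab
  exact hM.2 _ ha _ hb (fun h => hab (Sym2.congr_right.1 h)) x (Sym2.mem_mk_left x a)
    (Sym2.mem_mk_left x b)

lemma adj (hM : IsMatching G M) {x y : V} (h : s(x, y) ∈ M) : G.Adj x y :=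
  hM.1 h

lemma mono_s16 (hM : IsMatching G M) {M' : Set (Sym2 V)} (h : M' ⊆ M) : IsMatching G M' :=
  ⟨h.trans hM.1, fun e he f hf => hM.2 e (h he) f (h hf)⟩

lemma insert_of_not_coveredBy (hM : IsMatching G M) {x y : V} (hxy : G.Adj x y)
    (hx : ¬CoveredBy M x) (hy : ¬CoveredBy M y) : IsMatching G (insert s(x, y) M) := by
  have key : ∀ f ∈ M, ∀ z ∈ s(x, y), z ∉ f := by
    rintro f hf z hz hzf
    rcases Sym2.mem_iff.1 hz with rfl | rfl
    exacts [hx ⟨f, hf, hzf⟩, hy ⟨f, hf, hzf⟩]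
  refine ⟨Set.insert_subset hxy hM.1, ?_⟩
  rintro e (rfl | he) f (rfl | hf) hef z hze hzf
  · exact hef rfl
  · exact key f hf z hze hzf
  · exact key e he z hzf hze
  · exact hM.2 e he f hf hef z hze hzf

/-- `M'` is `M` with the edge `xw` replaced by `ux`. -/
lemma exists_exchange [Finite V] (hM : IsMatching G M) {u x w : V} (hu : ¬CoveredBy M u)
    (hux : G.Adj u x) (hxw : s(x, w) ∈ M) :
    ∃ M', IsMatching G M' ∧ M'.ncard = M.ncard ∧ ¬CoveredBy M' w ∧
      (∀ y, CoveredBy M' y → y = u ∨ CoveredBy M y) ∧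
      ∀ e, u ∉ e → x ∉ e → (e ∈ M' ↔ e ∈ M) := by
  set M₀ := M \ {s(x, w)}
  have hM₀ : M₀ ⊆ M := Set.sdiff_subset
  have hu₀ : ¬CoveredBy M₀ u := fun ⟨e, he, hue⟩ => hu ⟨e, hM₀ he, hue⟩
  have hunique : ∀ z ∈ s(x, w), ¬CoveredBy M₀ z := by
    rintro z hz ⟨e, ⟨he, hne⟩, hze⟩
    exact hM.2 e he _ hxw hne z hze hz
  have hxw' : x ≠ w := (hM.adj hxw).ne
  refine ⟨insert s(u, x) M₀,
    (hM.mono_s16 hM₀).insert_of_not_coveredBy hux hu₀ (hunique x (Sym2.mem_mk_left x w)),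
    ?_, ?_, ?_, ?_⟩
  · rw [ncard_insert_of_not_coveredBy hu₀, Set.ncard_sdiff_singleton_of_mem hxw]
    have := (Set.ncard_pos M.toFinite).2 ⟨_, hxw⟩
    omega
  · rintro ⟨e, rfl | he, hwe⟩
    · rcases Sym2.mem_iff.1 hwe with rfl | rfl
      exacts [hu ⟨_, hxw, Sym2.mem_mk_right x w⟩, hxw' rfl]
    · exact hunique w (Sym2.mem_mk_right x w) ⟨e, he, hwe⟩
  · rintro y ⟨e, rfl | he, hye⟩
    · rcases Sym2.mem_iff.1 hye with rfl | rfl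
      exacts [Or.inl rfl, Or.inr ⟨_, hxw, Sym2.mem_mk_left _ w⟩]
    · exact Or.inr ⟨e, hM₀ he, hye⟩
  · intro e hue hxe
    have h1 : e ≠ s(u, x) := fun h => hue (h ▸ Sym2.mem_mk_left u x)
    have h2 : e ≠ s(x, w) := fun h => hxe (h ▸ Sym2.mem_mk_left x w)
    simp [M₀, h1, h2]

lemma mem_of_alternates_cons {P Q : Sym2 V → Prop} (hM : IsMatching G M)
    (hQ : ∀ e, Q e → e ∈ M) {x : V} {l : List V} (h : Alternates P Q (x :: l))
    (hl : Even l.length) {y y' : V} (hy : y ∈ l) (hyy' : s(y, y') ∈ M) : y' ∈ l := by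
  obtain ⟨y'', hy'', h⟩ := h.exists_right_of_cons hl y hy
  exact hM.eq_of_mk_mem (hQ _ h) hyy' ▸ hy''

lemma mem_of_alternates_of_getLast? {P Q : Sym2 V → Prop} (hM : IsMatching G M)
    (hP : ∀ e, P e → e ∈ M) {x v : V} {l : List V} (h : Alternates P Q (x :: l))
    (hlast : (x :: l).getLast? = some v) (hv : ¬CoveredBy M v) (hl : Even l.length) {y y' : V}
    (hy : y ∈ x :: l) (hyy' : s(y, y') ∈ M) : y' ∈ x :: l := by
  obtain ⟨l₀, hl₀⟩ := List.getLast?_eq_some_iff.1 hlast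
  have hl₀len : Even l₀.length := by
    have := congrArg List.length hl₀
    simp only [List.length_cons, List.length_append] at this
    rwa [← Nat.add_right_cancel this]
  rw [hl₀, List.mem_append, List.mem_singleton] at hy ⊢
  rcases hy with hy | rfl
  · obtain ⟨y'', hy'', h⟩ := (hl₀ ▸ h).exists_left_of_append hl₀len y hy
    exact Or.inl (hM.eq_of_mk_mem (hP _ h) hyy' ▸ hy'')
  · exact absurd (coveredBy_iff_exists.2 ⟨y', hyy'⟩) hv

end IsMatching

def IsAltPath_s16 (G : SimpleGraph V) (M : Set (Sym2 V)) (p : List V) : Prop :=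
  p.Nodup ∧ p.IsChain G.Adj ∧ Alternates (· ∉ M) (· ∈ M) p

lemma altPathFrom_iff {G : SimpleGraph V} {M : Set (Sym2 V)} {u v : V} :
    AltPathFrom G M u v ↔ ∃ l, IsAltPath_s16 G M (u :: l) ∧ (u :: l).getLast? = some v := by
  have hget : ∀ p : List V, (∀ i (h : i + 1 < p.length),
      (s(p.get ⟨i, Nat.lt_of_succ_lt h⟩, p.get ⟨i + 1, h⟩) ∈ M ↔ i % 2 = 1)) ↔
      Alternates (· ∉ M) (· ∈ M) p := by
    intro p
    rw [alternates_iff_getElem]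
    refine forall₂_congr fun i _ => ?_
    rcases Nat.mod_two_eq_zero_or_one i with hi | hi <;> simp [hi]
  constructor
  · rintro ⟨_ | ⟨u', l⟩, -, hnd, hch, hu, hv, halt⟩
    · simp at hu
    · obtain rfl : u' = u := by simpa using hu
      exact ⟨l, ⟨hnd, hch, (hget _).1 halt⟩, hv⟩
  · rintro ⟨l, ⟨hnd, hch, halt⟩, hv⟩
    exact ⟨u :: l, List.cons_ne_nil u l, hnd, hch, rfl, hv, (hget _).2 halt⟩

lemma IsAltPath_s16.tail_tail {G : SimpleGraph V} {M M' : Set (Sym2 V)} {u x : V} {l : List V}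
    (hp : IsAltPath_s16 G M (u :: x :: l))
    (hM' : ∀ e, u ∉ e → x ∉ e → (e ∈ M' ↔ e ∈ M)) : IsAltPath_s16 G M' l := by
  obtain ⟨hnd, hch, halt⟩ := hp
  simp only [List.nodup_cons, List.mem_cons, not_or] at hnd
  have hsame : ∀ a ∈ l, ∀ b ∈ l, (s(a, b) ∈ M' ↔ s(a, b) ∈ M) := by
    intro a ha b hb
    refine hM' _ ?_ ?_ <;> rw [Sym2.mem_iff] <;> rintro (rfl | rfl) <;> tauto
  refine ⟨hnd.2.2, hch.tail.tail, halt.of_cons_cons.imp ?_ ?_⟩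
  · exact fun a ha b hb h => by rwa [hsame a ha b hb]
  · exact fun a ha b hb h => by rwa [hsame a ha b hb]

section Finite

variable [Finite V] {G : SimpleGraph V}

theorem IsAltPath_s16.exists_matching_not_coveredBy :
    ∀ {M : Set (Sym2 V)} {u v : V} {l : List V}, IsMatching G M → IsAltPath_s16 G M (u :: l) →
      ¬CoveredBy M u → (u :: l).getLast? = some v → Even l.length →
      ∃ M', IsMatching G M' ∧ M'.ncard = M.ncard ∧ ¬CoveredBy M' v
  | M, u, v, [], hM, _, hu, hv, _ => by
    obtain rfl : u = v := by simpa using hv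
    exact ⟨M, hM, rfl, hu⟩
  | _, _, _, [_], _, _, _, _, hl => by simp at hl
  | M, u, v, x :: w :: l, hM, hp, hu, hv, hl => by
    obtain ⟨M', hM', hcard, hw, -, hsame⟩ :=
      hM.exists_exchange hu (List.isChain_cons_cons.1 hp.2.1).1 hp.2.2.2.1
    obtain ⟨M'', hM'', hcard', hv''⟩ := IsAltPath_s16.exists_matching_not_coveredBy hM'
      (hp.tail_tail hsame) hw (by simpa using hv) (by simpa [Nat.even_add_one] using hl)
    exact ⟨M'', hM'', hcard'.trans hcard, hv''⟩

theorem IsAltPath_s16.exists_matching_ncard_succ :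
    ∀ {M : Set (Sym2 V)} {u v : V} {l : List V}, IsMatching G M → IsAltPath_s16 G M (u :: l) →
      ¬CoveredBy M u → (u :: l).getLast? = some v → ¬CoveredBy M v → Odd l.length →
      ∃ M', IsMatching G M' ∧ M'.ncard = M.ncard + 1
  | _, _, _, [], _, _, _, _, _, hl => by simp at hl
  | M, u, v, [x], hM, hp, hu, hv, hvM, _ => by
    obtain rfl : x = v := by simpa using hv
    exact ⟨_, hM.insert_of_not_coveredBy (List.isChain_pair.1 hp.2.1) hu hvM,
      ncard_insert_of_not_coveredBy hu⟩
  | M, u, v, x :: w :: l, hM, hp, hu, hv, hvM, hl => by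
    obtain ⟨M', hM', hcard, hw, hcov, hsame⟩ :=
      hM.exists_exchange hu (List.isChain_cons_cons.1 hp.2.1).1 hp.2.2.2.1
    have hv' : (w :: l).getLast? = some v := by simpa using hv
    have hvu : v ≠ u := by
      rintro rfl
      exact (List.nodup_cons.1 hp.1).1 (by simp [List.mem_of_getLast? hv'])
    have hvM' : ¬CoveredBy M' v := fun h => (hcov v h).elim hvu hvM
    obtain ⟨M'', hM'', hcard'⟩ := IsAltPath_s16.exists_matching_ncard_succ hM'
      (hp.tail_tail hsame) hw hv' hvM' (by simpa [Nat.odd_add_one] using hl)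
    exact ⟨M'', hM'', hcard'.trans (by rw [hcard])⟩

end Finite

variable [Fintype V] {G : SimpleGraph V} {M N : Set (Sym2 V)}

theorem IsMaxMatching.even_of_isAltPath (hN : IsMaxMatching G N) {u v : V} {l : List V}
    (hp : IsAltPath_s16 G N (u :: l)) (hu : ¬CoveredBy N u) (hlast : (u :: l).getLast? = some v)
    (hv : ¬CoveredBy N v) : Even l.length := by
  by_contra hl
  obtain ⟨N', hN', hcard⟩ :=
    hp.exists_matching_ncard_succ hN.1 hu hlast hv (Nat.not_even_iff_odd.1 hl)
  have := hN.2 N' hN'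
  omega

-- `z :: l` is the walk from `v` along edges of `M` and `N` in turn, read backwards.
theorem exists_altPath_of_not_coveredBy (hM : IsMatching G M) (hN : IsMaxMatching G N) {v : V}
    (hv : ¬CoveredBy N v) (z : V) (l : List V) (hnd : (z :: l).Nodup)
    (hch : (z :: l).IsChain G.Adj) (hlast : (z :: l).getLast? = some v) (hl : Even l.length)
    (halt : Alternates (fun e => e ∈ N ∧ e ∉ M) (fun e => e ∈ M ∧ e ∉ N) (z :: l)) :
    ∃ u l', ¬CoveredBy M u ∧ IsAltPath_s16 G M (u :: l') ∧ (u :: l').getLast? = some v ∧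
      Even l'.length := by
  have hN_mem : ∀ y ∈ z :: l, ∀ y', s(y, y') ∈ N → y' ∈ z :: l := fun y hy y' =>
    hN.1.mem_of_alternates_of_getLast? (fun _ h => h.1) halt hlast hv hl hy
  have hM_mem : ∀ y ∈ l, ∀ y', s(y, y') ∈ M → y' ∈ l := fun y hy y' =>
    hM.mem_of_alternates_cons (fun _ h => h.1) halt hl hy
  by_cases hz : CoveredBy M z
  · obtain ⟨w, hzw⟩ := coveredBy_iff_exists.1 hz
    have hw : w ∉ z :: l := by
      rintro (_ | ⟨_, hw⟩)
      · exact (hM.adj hzw).ne rfl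
      · exact (List.nodup_cons.1 hnd).1 (hM_mem w hw z (Sym2.eq_swap ▸ hzw))
    have hzwN : s(z, w) ∉ N := fun h => hw (hN_mem z (by simp) w h)
    by_cases hwN : CoveredBy N w
    · obtain ⟨t, hwt⟩ := coveredBy_iff_exists.1 hwN
      have ht : t ∉ w :: z :: l := by
        rintro (_ | ⟨_, ht⟩)
        · exact (hN.1.adj hwt).ne rfl
        · exact hw (hN_mem t ht w (Sym2.eq_swap ▸ hwt))
      have hwtM : s(w, t) ∉ M := fun h => ht (by simp [hM.eq_of_mk_mem h (Sym2.eq_swap ▸ hzw)])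
      have hnd' : (t :: w :: z :: l).Nodup :=
        List.nodup_cons.2 ⟨ht, List.nodup_cons.2 ⟨hw, hnd⟩⟩
      have hch' : (t :: w :: z :: l).IsChain G.Adj := List.isChain_cons_cons.2
        ⟨(hN.1.adj hwt).symm, List.isChain_cons_cons.2 ⟨(hM.adj hzw).symm, hch⟩⟩
      exact exists_altPath_of_not_coveredBy hM hN hv t (w :: z :: l) hnd' hch'
        (by simpa using hlast) (by simpa [Nat.even_add_one] using hl)
        ⟨⟨Sym2.eq_swap ▸ hwt, Sym2.eq_swap ▸ hwtM⟩,
          ⟨Sym2.eq_swap ▸ hzw, Sym2.eq_swap ▸ hzwN⟩, halt⟩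
    · have hp : IsAltPath_s16 G N (w :: z :: l) :=
        ⟨List.nodup_cons.2 ⟨hw, hnd⟩, List.isChain_cons_cons.2 ⟨(hM.adj hzw).symm, hch⟩,
          Sym2.eq_swap ▸ hzwN, halt.imp (fun _ _ _ _ h => h.1) (fun _ _ _ _ h => h.2)⟩
      exact absurd hl
        (Nat.even_add_one.1 (hN.even_of_isAltPath hp hwN (by simpa using hlast) hv))
  · refine ⟨z, l, hz, ⟨hnd, hch, ?_⟩, hlast, hl⟩
    exact halt.imp (fun _ _ _ _ h => h.2) (fun _ _ _ _ h => h.1)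
termination_by Fintype.card V - l.length
decreasing_by
  have := hnd'.length_le_card
  simp only [List.length_cons] at this ⊢
  omega

theorem coveredByAllMax_iff (hM : IsMaxMatching G M) {v : V} :
    CoveredByAllMax G v ↔ ¬∃ u l, ¬CoveredBy M u ∧ IsAltPath_s16 G M (u :: l) ∧
      (u :: l).getLast? = some v ∧ Even l.length := by
  constructor
  · rintro hv ⟨u, l, hu, hp, hlast, hl⟩
    obtain ⟨M', hM', hcard, hvM'⟩ := hp.exists_matching_not_coveredBy hM.1 hu hlast hl
    exact hvM' (hv M' ⟨hM', fun N hN => hcard ▸ hM.2 N hN⟩)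
  · intro h N hN
    by_contra hv
    exact h (exists_altPath_of_not_coveredBy hM.1 hN hv v [] (List.nodup_singleton v)
      (List.isChain_singleton v) rfl Even.zero trivial)

end AlternatingPaths

namespace IsBipartition

variable {V : Type*} {G : SimpleGraph V} {X Y : Set V}

lemma mem_right_iff (hB : IsBipartition G X Y) {v : V} : v ∈ Y ↔ v ∉ X :=
  ⟨fun hY hX => Set.disjoint_left.1 hB.2.1 hX hY,
    fun hX => ((hB.1 ▸ Set.mem_univ v : v ∈ X ∪ Y)).resolve_left hX⟩

lemma mem_left_iff_of_adj (hB : IsBipartition G X Y) {x y : V} (h : G.Adj x y) :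
    x ∈ X ↔ y ∉ X := by
  rcases hB.2.2 x y h with ⟨hx, hy⟩ | ⟨hx, hy⟩
  · exact iff_of_true hx (hB.mem_right_iff.1 hy)
  · exact iff_of_false (hB.mem_right_iff.1 hx) (not_not.2 hy)

lemma mem_iff_mem_iff_even (hB : IsBipartition G X Y) :
    ∀ {u v : V} {l : List V}, (u :: l).IsChain G.Adj → (u :: l).getLast? = some v →
      ((u ∈ X ↔ v ∈ X) ↔ Even l.length)
  | u, v, [], _, hv => by
    obtain rfl : u = v := by simpa using hv
    simp
  | u, v, x :: l, hch, hv => by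
    rw [List.isChain_cons_cons] at hch
    rw [List.length_cons, Nat.even_add_one, ← hB.mem_iff_mem_iff_even hch.2 (by simpa using hv),
      hB.mem_left_iff_of_adj hch.1]
    tauto

end IsBipartition

/-- Characterization of `𝔐(G)` via alternating paths: a vertex is covered
by every maximum matching iff it is not reachable by an `M`-alternating path from an
`M`-uncovered vertex of its own side, for any fixed maximum matching `M`. -/
theorem stmt_16 {V : Type*} [Fintype V] (G : SimpleGraph V) (X Y : Set V)
    (hB : IsBipartition G X Y) (M : Set (Sym2 V)) (hM : IsMaxMatching G M) (v : V) :
    CoveredByAllMax G v ↔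
      ¬ ((v ∈ X ∧ ∃ u ∈ X, ¬ CoveredBy M u ∧ AltPathFrom G M u v) ∨
         (v ∈ Y ∧ ∃ u ∈ Y, ¬ CoveredBy M u ∧ AltPathFrom G M u v)) := by
  rw [coveredByAllMax_iff hM]
  refine not_congr ⟨?_, ?_⟩
  · rintro ⟨u, l, hu, hp, hlast, hl⟩
    have hside := (hB.mem_iff_mem_iff_even hp.2.1 hlast).2 hl
    have halt : AltPathFrom G M u v := altPathFrom_iff.2 ⟨l, hp, hlast⟩
    by_cases hv : v ∈ X
    · exact Or.inl ⟨hv, u, hside.2 hv, hu, halt⟩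
    · exact Or.inr ⟨hB.mem_right_iff.2 hv, u, hB.mem_right_iff.2 (hv ∘ hside.1), hu, halt⟩
  · rintro (⟨hv, u, hu, huM, halt⟩ | ⟨hv, u, hu, huM, halt⟩) <;>
      obtain ⟨l, hp, hlast⟩ := altPathFrom_iff.1 halt <;>
      refine ⟨u, l, huM, hp, hlast, (hB.mem_iff_mem_iff_even hp.2.1 hlast).1 ?_⟩
    · exact iff_of_true hu hv
    · exact iff_of_false (hB.mem_right_iff.1 hu) (hB.mem_right_iff.1 hv)
end

section
/- Let T be a semi-complete digraph and k a nonnegative integer. If T contains a (520k+2, 20k)-degree tangle or a (20k+1, 20k)-matching tangle, then every simple digraph H with |V(H)| + |E(H)| ≤ k is topologically contained in T. -/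
/-!
Both kinds of tangle contain a set `S` of at least `k` vertices that is robustly linked: any two
vertices of `S` are joined by a path with at most three internal vertices avoiding any prescribed
set `F` of at most `3k` other vertices. Then `H` embeds greedily: place its vertices injectively
in `S` and route its arcs one at a time, avoiding the branch vertices and the interiors of the
paths chosen so far, of which there are at most `|V(H)| + 3|E(H)| ≤ 3k`.

Both tangle arguments rest on the fact that a semi-complete digraph on `n` vertices has a vertex
of outdegree (and one of indegree) at least `(n - 1) / 2`.

For a degree tangle `X` and `v ∈ X`, the vertices reachable from `v` in at most three steps in
`T - F` include all but `49k` vertices of `X`: the vertices of `X` outside `F` that are not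
reached beat everything reachable in two steps, so if there were many of them, the one with the
most outneighbours among them would have outdegree more than `20k` above that of `v`. Hence every
vertex with more than `49k` inneighbours in `X` is reached from `v` in four steps, and all but
`98k + 2` vertices of `X` are of this kind.

For a matching tangle `(X, Y)` with matching `f`, let `x, x'` be vertices of `X` with at least
`9k` outneighbours in `X` (all but `18k` vertices of `X` are such). Choose an outneighbour `x₂`
of `x` in `X` with `x₂, f x₂ ∉ F`. As the outdegree of `f x₂` exceeds that of `x'` by more than
`20k`, at least `20k` vertices `z` satisfy `f x₂ → z → x'`, and `x → x₂ → f x₂ → z → x'` is the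
required path.
-/

open Finset

section

open scoped Classical

variable {V : Type*} {E : V → V → Prop}

namespace SemiComplete

lemma ne_of_adj (hT : SemiComplete E) {v w : V} (h : E v w) : v ≠ w :=
  fun hvw => hT.1 v (hvw ▸ h)

lemma adj_of_not_adj (hT : SemiComplete E) {v w : V} (hvw : v ≠ w) (h : ¬ E v w) : E w v :=
  (hT.2 v w hvw).resolve_left h

lemma flip (hT : SemiComplete E) : SemiComplete (flip E) :=
  ⟨hT.1, fun v w hvw => hT.2 w v hvw.symm⟩

lemma card_mul_self_le_two_mul_sum_card_filter_add_card (hT : SemiComplete E) (Q : Finset V) :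
    #Q * #Q ≤ 2 * ∑ q ∈ Q, #{z ∈ Q | E q z} + #Q := by
  have hcover : ∀ q ∈ Q, #Q ≤ #{z ∈ Q | E q z} + #{z ∈ Q | E z q} + 1 := by
    intro q hq
    refine (card_le_card fun z hz => ?_).trans
      ((card_union_le _ _).trans (add_le_add (card_union_le _ _) (card_singleton q).le))
    rcases eq_or_ne z q with rfl | hzq
    · exact mem_union_right _ (mem_singleton_self z)
    rcases hT.2 q z hzq.symm with h | h
    · exact mem_union_left _ (mem_union_left _ (mem_filter.2 ⟨hz, h⟩))
    · exact mem_union_left _ (mem_union_right _ (mem_filter.2 ⟨hz, h⟩))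
  have hswap : ∑ q ∈ Q, #{z ∈ Q | E z q} = ∑ q ∈ Q, #{z ∈ Q | E q z} := by
    simp only [card_filter]
    exact sum_comm
  calc #Q * #Q = ∑ _q ∈ Q, #Q := by rw [sum_const, smul_eq_mul]
    _ ≤ ∑ q ∈ Q, (#{z ∈ Q | E q z} + #{z ∈ Q | E z q} + 1) := sum_le_sum hcover
    _ = 2 * ∑ q ∈ Q, #{z ∈ Q | E q z} + #Q := by
      rw [sum_add_distrib, sum_add_distrib, hswap, two_mul, card_eq_sum_ones]

lemma exists_card_le_two_mul_card_filter_add_one (hT : SemiComplete E) {Q : Finset V}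
    (hQ : Q.Nonempty) : ∃ q ∈ Q, #Q ≤ 2 * #{z ∈ Q | E q z} + 1 := by
  by_contra! h
  have hsum : ∑ q ∈ Q, (2 * #{z ∈ Q | E q z} + 1) < ∑ _q ∈ Q, #Q :=
    sum_lt_sum_of_nonempty hQ h
  rw [sum_add_distrib, ← mul_sum, sum_const, sum_const, smul_eq_mul, smul_eq_mul] at hsum
  have := hT.card_mul_self_le_two_mul_sum_card_filter_add_card Q
  omega

lemma card_le_two_mul_of_forall_card_filter_lt (hT : SemiComplete E) {Q : Finset V} {m : ℕ}
    (h : ∀ q ∈ Q, #{z ∈ Q | E q z} < m) : #Q ≤ 2 * m := by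
  rcases Q.eq_empty_or_nonempty with rfl | hQ
  · simp
  obtain ⟨q, hq, hQq⟩ := hT.exists_card_le_two_mul_card_filter_add_one hQ
  have := h q hq
  omega

end SemiComplete

lemma mem_of_mem_internals {p : List V} {z : V} (hz : z ∈ internals p) : z ∈ p :=
  List.drop_subset 1 p (List.dropLast_subset _ hz)

lemma length_internals (p : List V) : (internals p).length = p.length - 2 := by
  simp only [internals, List.length_dropLast, List.length_drop]
  omega

lemma PathFrom.ne_of_mem_internals {v w z : V} {p : List V} (hp : PathFrom E v w p)
    (hz : z ∈ internals p) : z ≠ v ∧ z ≠ w := by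
  obtain ⟨⟨hne, hnd, -⟩, hv, hw⟩ := hp
  constructor
  · obtain ⟨a, t, rfl⟩ := List.exists_cons_of_ne_nil hne
    obtain rfl : a = v := by simpa using hv
    rintro rfl
    exact (List.nodup_cons.1 hnd).1 (List.dropLast_subset _ hz)
  · have hzd : z ∈ p.dropLast := by
      rw [internals, List.dropLast_drop_eq_drop_dropLast] at hz
      exact List.drop_subset _ _ hz
    rw [List.getLast?_eq_some_getLast hne, Option.some_inj] at hw
    rw [← List.dropLast_append_getLast hne, List.nodup_append] at hnd
    exact hnd.2.2 z hzd w (by simp [hw])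

lemma PathFrom.concat {v r z : V} {p : List V} (hp : PathFrom E v r p) (hE : E r z)
    (hz : z ∉ p) : PathFrom E v z (p ++ [z]) := by
  obtain ⟨⟨hne, hnd, hch⟩, hv, hr⟩ := hp
  refine ⟨⟨by simp, ?_, ?_⟩, by rwa [List.head?_append_of_ne_nil _ hne],
    List.getLast?_concat⟩
  · exact List.nodup_append.2 ⟨hnd, List.nodup_singleton z,
      by simpa using fun x hx (h : x = z) => hz (h ▸ hx)⟩
  · exact List.isChain_append.2 ⟨hch, List.isChain_singleton z, by simpa [hr] using hE⟩

def IsLinked (E : V → V → Prop) (m d : ℕ) (S : Finset V) : Prop :=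
  ∀ v ∈ S, ∀ w ∈ S, v ≠ w → ∀ F : Finset V, #F ≤ m → v ∉ F → w ∉ F →
    ∃ p, PathFrom E v w p ∧ (internals p).length ≤ d ∧ ∀ z ∈ internals p, z ∉ F

section Routing

variable {W : Type*} [Fintype W] (η : W → V)

noncomputable def occupied (P : W × W → List V) (A : Finset (W × W)) : Finset V :=
  univ.image η ∪ A.biUnion fun a => (internals (P a)).toFinset

variable {η}

lemma mem_occupied {P : W × W → List V} {A : Finset (W × W)} {z : V} :
    z ∈ occupied η P A ↔ z ∈ Set.range η ∨ ∃ a ∈ A, z ∈ internals (P a) := by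
  simp [occupied, and_comm]

lemma occupied_congr {P Q : W × W → List V} {A : Finset (W × W)} (h : ∀ a ∈ A, P a = Q a) :
    occupied η P A = occupied η Q A := by
  simp only [occupied]
  rw [biUnion_congr rfl fun a ha => by rw [h a ha]]

lemma card_occupied_le {P : W × W → List V} {A : Finset (W × W)} {d : ℕ}
    (hd : ∀ a ∈ A, (internals (P a)).length ≤ d) :
    #(occupied η P A) ≤ Fintype.card W + d * #A := by
  refine (card_union_le _ _).trans (add_le_add (card_image_le.trans_eq card_univ) ?_)
  calc #(A.biUnion fun a => (internals (P a)).toFinset)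
      ≤ ∑ a ∈ A, #(internals (P a)).toFinset := card_biUnion_le
    _ ≤ ∑ _a ∈ A, d := sum_le_sum fun a ha => (List.toFinset_card_le _).trans (hd a ha)
    _ = d * #A := by rw [sum_const, smul_eq_mul, mul_comm]

variable (E η) in
/-- The interior of each path `P a` avoids the branch vertices and the interiors of all other
paths. -/
def IsRouting (d : ℕ) (A : Finset (W × W)) (P : W × W → List V) : Prop :=
  ∀ a ∈ A, PathFrom E (η a.1) (η a.2) (P a) ∧ (internals (P a)).length ≤ d ∧
    ∀ z ∈ internals (P a), z ∉ occupied η P (A.erase a)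

lemma IsRouting.insert {d : ℕ} {A : Finset (W × W)} {P : W × W → List V} {a : W × W}
    {p : List V} (hP : IsRouting E η d A P) (ha : a ∉ A) (hp : PathFrom E (η a.1) (η a.2) p)
    (hpd : (internals p).length ≤ d) (hpA : ∀ z ∈ internals p, z ∉ occupied η P A) :
    IsRouting E η d (insert a A) (Function.update P a p) := by
  have hPA : ∀ b ∈ A, P b = Function.update P a p b := fun b hb =>
    (Function.update_of_ne (ne_of_mem_of_not_mem hb ha) p P).symm
  intro b hb
  rcases mem_insert.1 hb with rfl | hbA
  · rw [Function.update_self, erase_insert ha, ← occupied_congr hPA]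
    exact ⟨hp, hpd, hpA⟩
  · have hba : b ≠ a := ne_of_mem_of_not_mem hbA ha
    obtain ⟨hPb, hbd, hbo⟩ := hP b hbA
    rw [← hPA b hbA, erase_insert_of_ne hba.symm]
    refine ⟨hPb, hbd, fun z hz hzo => ?_⟩
    rcases mem_occupied.1 hzo with hzη | ⟨c, hc, hzc⟩
    · exact hbo z hz (mem_occupied.2 (Or.inl hzη))
    rcases mem_insert.1 hc with rfl | hc
    · rw [Function.update_self] at hzc
      exact hpA z hzc (mem_occupied.2 (Or.inr ⟨b, hbA, hz⟩))
    · rw [← hPA c (mem_of_mem_erase hc)] at hzc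
      exact hbo z hz (mem_occupied.2 (Or.inr ⟨c, hc, hzc⟩))

lemma IsLinked.exists_isRouting {m d : ℕ} {S : Finset V} (hS : IsLinked E m d S)
    (hηS : ∀ u, η u ∈ S) (hη : Function.Injective η) (A : Finset (W × W))
    (hA : ∀ a ∈ A, a.1 ≠ a.2) (hm : Fintype.card W + d * #A ≤ m) :
    ∃ P, IsRouting E η d A P := by
  induction A using Finset.induction_on with
  | empty => exact ⟨fun _ => [], fun a ha => absurd ha (notMem_empty a)⟩
  | insert a A ha ih =>
    rw [card_insert_of_notMem ha] at hm
    obtain ⟨P, hP⟩ := ih (fun b hb => hA b (mem_insert_of_mem hb))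
      (le_trans (by gcongr; omega) hm)
    have hO := card_occupied_le (η := η) fun b hb => (hP b hb).2.1
    set F := ((occupied η P A).erase (η a.1)).erase (η a.2)
    obtain ⟨p, hp, hpd, hpF⟩ := hS _ (hηS a.1) _ (hηS a.2)
      (hη.ne (hA a (mem_insert_self a A))) F
      ((card_erase_le.trans card_erase_le).trans (hO.trans (le_trans (by gcongr; omega) hm)))
      (fun h => notMem_erase _ _ (mem_of_mem_erase h)) (notMem_erase _ _)
    refine ⟨_, hP.insert ha hp hpd fun z hz hzO => hpF z hz ?_⟩
    obtain ⟨hz1, hz2⟩ := hp.ne_of_mem_internals hz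
    exact mem_erase.2 ⟨hz2, mem_erase.2 ⟨hz1, hzO⟩⟩

end Routing

lemma IsLinked.topContain {W : Type*} [Fintype W] {m d : ℕ} {S : Finset V}
    (hS : IsLinked E m d S) (hW : Fintype.card W ≤ #S) (Eh : W → W → Prop)
    (hH : ∀ w : W, ¬ Eh w w)
    (hsize : Fintype.card W + d * {p : W × W | Eh p.1 p.2}.ncard ≤ m) :
    TopContain Eh E := by
  obtain ⟨e⟩ : Nonempty (W ↪ S) := Function.Embedding.nonempty_iff_card_le.2 (by simpa)
  set A : Finset (W × W) := {p | Eh p.1 p.2}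
  rw [Set.ncard_eq_toFinset_card', Set.toFinset_ofPred] at hsize
  have hA : ∀ {u v}, Eh u v → (u, v) ∈ A := fun h => mem_filter.2 ⟨mem_univ _, h⟩
  obtain ⟨P, hP⟩ := hS.exists_isRouting (η := fun u => (e u).1) (fun u => (e u).2)
    (fun u v h => e.injective (Subtype.ext h)) A
    (fun a ha h => hH a.2 (h ▸ (mem_filter.1 ha).2)) hsize
  refine ⟨fun u => (e u).1, fun u v => P (u, v), fun u v h => e.injective (Subtype.ext h),
    fun u v h => (hP _ (hA h)).1, fun u v h z hz hzη => ?_,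
    fun u v u' v' h h' hne z hz hz' => ?_⟩
  · exact (hP _ (hA h)).2.2 z hz (mem_occupied.2 (Or.inl hzη))
  · exact (hP _ (hA h)).2.2 z hz
      (mem_occupied.2 (Or.inr ⟨_, mem_erase.2 ⟨hne.symm, hA h'⟩, hz'⟩))

variable [Fintype V]

lemma outdeg_eq_card_filter (E : V → V → Prop) (v : V) : outdeg E v = #{w | E v w} := by
  rw [outdeg, Set.ncard_eq_toFinset_card', Set.toFinset_ofPred]

lemma SemiComplete.outdeg_le_card_filter_add_outdeg (hT : SemiComplete E) (a b : V) :
    outdeg E a ≤ #{z | E a z ∧ E z b} + outdeg E b + 1 := by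
  rw [outdeg_eq_card_filter, outdeg_eq_card_filter]
  calc #{z | E a z}
      ≤ #((({z | E a z ∧ E z b} : Finset V) ∪ ({z | E b z} : Finset V)) ∪ {b}) := by
        refine card_le_card fun z hz => ?_
        have haz := (mem_filter.1 hz).2
        by_cases hzb : z = b
        · simp [hzb]
        by_cases hEzb : E z b
        · simp [haz, hEzb]
        · simp [hT.adj_of_not_adj hzb hEzb]
    _ ≤ _ := (card_union_le _ _).trans (add_le_add (card_union_le _ _) (card_singleton b).le)

noncomputable def reachAvoiding (E : V → V → Prop) (F : Finset V) (v : V) : ℕ → Finset V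
  | 0 => {v}
  | j + 1 =>
    reachAvoiding E F v j ∪ ({z | z ∉ F ∧ ∃ r ∈ reachAvoiding E F v j, E r z} : Finset V)

variable {F : Finset V} {v : V}

lemma reachAvoiding_mono : Monotone (reachAvoiding E F v) :=
  monotone_nat_of_le_succ fun _ => subset_union_left

lemma self_mem_reachAvoiding (j : ℕ) : v ∈ reachAvoiding E F v j :=
  reachAvoiding_mono (Nat.zero_le j) (mem_singleton_self v)

lemma mem_reachAvoiding_succ {j : ℕ} {z y : V} (hz : z ∈ reachAvoiding E F v j) (hE : E z y)
    (hy : y ∉ F) : y ∈ reachAvoiding E F v (j + 1) :=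
  mem_union_right _ (mem_filter.2 ⟨mem_univ _, hy, z, hz, hE⟩)

lemma notMem_of_mem_reachAvoiding (hv : v ∉ F) :
    ∀ {j : ℕ} {z : V}, z ∈ reachAvoiding E F v j → z ∉ F
  | 0, z, hz => by rwa [mem_singleton.1 hz]
  | j + 1, z, hz => by
    rcases mem_union.1 hz with hz | hz
    exacts [notMem_of_mem_reachAvoiding hv hz, (mem_filter.1 hz).2.1]

lemma SemiComplete.outdeg_add_one_le_card_reachAvoiding (hT : SemiComplete E) (F : Finset V)
    (v : V) : outdeg E v + 1 ≤ #(reachAvoiding E F v 1) + #F := by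
  have hsub : insert v (({w | E v w} : Finset V) \ F) ⊆ reachAvoiding E F v 1 := by
    refine insert_subset (self_mem_reachAvoiding 1) fun w hw => ?_
    obtain ⟨hvw, hwF⟩ := mem_sdiff.1 hw
    exact mem_reachAvoiding_succ (self_mem_reachAvoiding 0) (mem_filter.1 hvw).2 hwF
  have hv : v ∉ ({w | E v w} : Finset V) \ F := fun h => hT.1 v (mem_filter.1 (mem_sdiff.1 h).1).2
  have := card_le_card hsub
  rw [card_insert_of_notMem hv] at this
  have := card_le_card_sdiff_add_card (s := ({w | E v w} : Finset V)) (t := F)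
  rw [outdeg_eq_card_filter]
  omega

lemma exists_pathFrom_of_mem_reachAvoiding :
    ∀ {j : ℕ} {z : V}, z ∈ reachAvoiding E F v j →
      ∃ p, PathFrom E v z p ∧ p.length ≤ j + 1 ∧ ∀ x ∈ p, x ∈ reachAvoiding E F v j
  | 0, z, hz => by
    obtain rfl := mem_singleton.1 hz
    exact ⟨[z], ⟨⟨by simp, List.nodup_singleton z, List.isChain_singleton z⟩, rfl, rfl⟩,
      le_rfl, by simpa using self_mem_reachAvoiding 0⟩
  | j + 1, z, hz => by
    by_cases hzj : z ∈ reachAvoiding E F v j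
    · obtain ⟨p, hp, hlen, hmem⟩ := exists_pathFrom_of_mem_reachAvoiding hzj
      exact ⟨p, hp, by omega, fun x hx => reachAvoiding_mono j.le_succ (hmem x hx)⟩
    · obtain ⟨-, -, r, hr, hrz⟩ := mem_filter.1 ((mem_union.1 hz).resolve_left hzj)
      obtain ⟨p, hp, hlen, hmem⟩ := exists_pathFrom_of_mem_reachAvoiding hr
      refine ⟨p ++ [z], hp.concat hrz fun hzp => hzj (hmem z hzp), by simpa using hlen, ?_⟩
      intro x hx
      rcases List.mem_append.1 hx with hx | hx
      · exact reachAvoiding_mono j.le_succ (hmem x hx)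
      · rwa [List.mem_singleton.1 hx]

lemma SemiComplete.card_sdiff_reachAvoiding_three_le (hT : SemiComplete E) {X : Finset V}
    {ℓ : ℕ} (hX : ∀ q ∈ X, outdeg E q ≤ outdeg E v + ℓ) :
    #(X \ reachAvoiding E F v 3) ≤ 2 * (ℓ + #F) + #F := by
  set Z := (X \ reachAvoiding E F v 3) \ F
  have hbeats : ∀ y ∈ Z, ∀ z ∈ reachAvoiding E F v 2, E y z := by
    intro y hy z hz
    simp only [Z, mem_sdiff] at hy
    have hzy : z ≠ y := fun h => hy.1.2 (reachAvoiding_mono (by norm_num) (h ▸ hz))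
    exact hT.adj_of_not_adj hzy fun hE => hy.1.2 (mem_reachAvoiding_succ hz hE hy.2)
  have hZ : #Z ≤ 2 * (ℓ + #F) := by
    refine hT.card_le_two_mul_of_forall_card_filter_lt fun q hq => ?_
    have hdisj : Disjoint (reachAvoiding E F v 2) {z ∈ Z | E q z} :=
      disjoint_left.2 fun z hz hz' =>
        (mem_sdiff.1 (mem_sdiff.1 (mem_filter.1 hz').1).1).2 (reachAvoiding_mono (by norm_num) hz)
    have hout : #(reachAvoiding E F v 2) + #{z ∈ Z | E q z} ≤ outdeg E q := by
      rw [← card_union_of_disjoint hdisj, outdeg_eq_card_filter]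
      refine card_le_card (union_subset (fun z hz => ?_) fun z hz => ?_) <;> rw [mem_filter]
      exacts [⟨mem_univ z, hbeats q hq z hz⟩, ⟨mem_univ z, (mem_filter.1 hz).2⟩]
    have h12 := card_le_card (reachAvoiding_mono (E := E) (F := F) (v := v) (by norm_num : 1 ≤ 2))
    have := hT.outdeg_add_one_le_card_reachAvoiding F v
    have := hX q (mem_sdiff.1 (mem_sdiff.1 hq).1).1
    omega
  calc #(X \ reachAvoiding E F v 3) ≤ #Z + #F := card_le_card_sdiff_add_card
    _ ≤ 2 * (ℓ + #F) + #F := by omega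

lemma DegreeTangle.isLinked (hT : SemiComplete E) {k : ℕ} {X : Set V}
    (hX : DegreeTangle E (520 * k + 2) (20 * k) X) :
    IsLinked E (3 * k) 3 {w ∈ X.toFinset | 49 * k < #{a ∈ X.toFinset | E a w}} := by
  intro v hv w hw hvw F hF hvF hwF
  have hvX : v ∈ X := Set.mem_toFinset.1 (mem_filter.1 hv).1
  obtain ⟨a, ha, haR⟩ : ∃ a ∈ X.toFinset, E a w ∧ a ∈ reachAvoiding E F v 3 := by
    by_contra! h
    have hsub : {a ∈ X.toFinset | E a w} ⊆ X.toFinset \ reachAvoiding E F v 3 := fun a ha =>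
      mem_sdiff.2 ⟨(mem_filter.1 ha).1, h a (mem_filter.1 ha).1 (mem_filter.1 ha).2⟩
    have := hT.card_sdiff_reachAvoiding_three_le (X := X.toFinset) (F := F)
      fun q hq => hX.2 q (Set.mem_toFinset.1 hq) v hvX
    have := card_le_card hsub
    have := (mem_filter.1 hw).2
    omega
  obtain ⟨p, hp, hlen, hmem⟩ := exists_pathFrom_of_mem_reachAvoiding
    (mem_reachAvoiding_succ haR.2 haR.1 hwF)
  exact ⟨p, hp, by rw [length_internals]; omega,
    fun z hz => notMem_of_mem_reachAvoiding hvF (hmem z (mem_of_mem_internals hz))⟩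

lemma DegreeTangle.exists_isLinked (hT : SemiComplete E) {k : ℕ} {X : Set V}
    (hX : DegreeTangle E (520 * k + 2) (20 * k) X) :
    ∃ S : Finset V, k ≤ #S ∧ IsLinked E (3 * k) 3 S := by
  refine ⟨_, ?_, hX.isLinked hT⟩
  have hQ : #{w ∈ X.toFinset | ¬ 49 * k < #{a ∈ X.toFinset | E a w}} ≤ 2 * (49 * k + 1) := by
    refine hT.flip.card_le_two_mul_of_forall_card_filter_lt fun q hq => ?_
    refine (card_le_card (filter_subset_filter _ (filter_subset _ X.toFinset))).trans_lt ?_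
    exact Nat.lt_succ_of_le (not_lt.1 (mem_filter.1 hq).2)
  have := card_filter_add_card_filter_not (s := X.toFinset)
    fun w => 49 * k < #{a ∈ X.toFinset | E a w}
  have := Set.ncard_eq_toFinset_card' X ▸ hX.1
  omega

lemma SemiComplete.exists_adj_adj_notMem (hT : SemiComplete E) {b c : V} {G : Finset V}
    (h : outdeg E c + #G + 1 < outdeg E b) : ∃ z, E b z ∧ E z c ∧ z ∉ G := by
  obtain ⟨z, hz, hzG⟩ := exists_mem_notMem_of_card_lt_card (s := G)
    (t := {z | E b z ∧ E z c}) (by have := hT.outdeg_le_card_filter_add_outdeg b c; omega)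
  exact ⟨z, (mem_filter.1 hz).2.1, (mem_filter.1 hz).2.2, hzG⟩

lemma exists_mem_notMem_of_injOn {α β : Type*} {f : α → β} {A G : Finset α} {H : Finset β}
    (hf : Set.InjOn f A) (h : #G + #H < #A) : ∃ a ∈ A, a ∉ G ∧ f a ∉ H := by
  have hpre : #{a ∈ A | f a ∈ H} ≤ #H :=
    card_le_card_of_injOn f (fun a ha => (mem_filter.1 ha).2) (hf.mono (filter_subset _ A))
  obtain ⟨a, ha, haG⟩ := exists_mem_notMem_of_card_lt_card (s := G ∪ {a ∈ A | f a ∈ H})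
    (t := A) ((card_union_le _ _).trans_lt (by omega))
  rw [mem_union, not_or, mem_filter, not_and] at haG
  exact ⟨a, ha, haG.1, haG.2 ha⟩

lemma MatchingTangle.isLinked (hT : SemiComplete E) {k : ℕ} {X Y : Set V}
    (hM : MatchingTangle E (20 * k + 1) (20 * k) X Y) :
    IsLinked E (3 * k) 3 {x ∈ X.toFinset | 9 * k ≤ #{z ∈ X.toFinset | E x z}} := by
  obtain ⟨hXY, hcard, -, ⟨f, hf, hEf⟩, hgap⟩ := hM
  intro x hx x' hx' hxx' F hF hxF hx'F
  obtain ⟨hxX, hxdeg⟩ := mem_filter.1 hx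
  have hx'X : x' ∈ X.toFinset := (mem_filter.1 hx').1
  have hk : 1 ≤ k := by
    have := one_lt_card.2 ⟨x, hxX, x', hx'X, hxx'⟩
    rw [Set.ncard_eq_toFinset_card'] at hcard
    omega
  obtain ⟨x₂, hx₂, hx₂', hfx₂F⟩ :=
    exists_mem_notMem_of_injOn (A := {z ∈ X.toFinset | E x z}) (G := insert x' F) (H := F)
      (hf.injOn.mono fun a ha => Set.mem_toFinset.1 (mem_filter.1 ha).1)
      (by have := card_insert_le x' F; omega)
  obtain ⟨hx₂X, hxx₂⟩ := mem_filter.1 hx₂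
  obtain ⟨hx₂x', hx₂F⟩ := not_or.1 (mem_insert.not.1 hx₂')
  have hfx₂Y : f x₂ ∈ Y := hf.mapsTo (Set.mem_toFinset.1 hx₂X)
  have hfx₂X : f x₂ ∉ X := Set.disjoint_right.1 hXY hfx₂Y
  obtain ⟨z, hfx₂z, hzx', hz⟩ :=
      hT.exists_adj_adj_notMem (b := f x₂) (c := x') (G := F ∪ {x, x₂}) <| by
    have := hgap x' (Set.mem_toFinset.1 hx'X) (f x₂) hfx₂Y
    have := card_union_le F {x, x₂}
    have := card_le_two (a := x) (b := x₂)
    omega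
  simp only [mem_union, mem_insert, mem_singleton, not_or] at hz
  have hx₂fx₂ := hEf x₂ (Set.mem_toFinset.1 hx₂X)
  refine ⟨[x, x₂, f x₂, z, x'], ⟨⟨List.cons_ne_nil _ _, ?_, ?_⟩, rfl, rfl⟩,
    by simp [internals], ?_⟩
  · have := hT.ne_of_adj hxx₂
    have := hT.ne_of_adj hx₂fx₂
    have := hT.ne_of_adj hfx₂z
    have := hT.ne_of_adj hzx'
    have : f x₂ ≠ x := fun h => hfx₂X (h ▸ Set.mem_toFinset.1 hxX)
    have : f x₂ ≠ x' := fun h => hfx₂X (h ▸ Set.mem_toFinset.1 hx'X)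
    simp only [List.nodup_cons, List.mem_cons, List.not_mem_nil, List.nodup_nil]
    grind
  · exact .cons_cons hxx₂ <| .cons_cons hx₂fx₂ <| .cons_cons hfx₂z <|
      .cons_cons hzx' (.singleton x')
  · simp only [internals, List.drop_one, List.tail_cons, List.dropLast_cons_cons,
      List.dropLast_singleton, List.mem_cons, List.not_mem_nil, or_false]
    rintro y (rfl | rfl | rfl)
    exacts [hx₂F, hfx₂F, hz.1]

lemma MatchingTangle.exists_isLinked (hT : SemiComplete E) {k : ℕ} {X Y : Set V}
    (hM : MatchingTangle E (20 * k + 1) (20 * k) X Y) :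
    ∃ S : Finset V, k ≤ #S ∧ IsLinked E (3 * k) 3 S := by
  refine ⟨_, ?_, hM.isLinked hT⟩
  have hQ : #{x ∈ X.toFinset | ¬ 9 * k ≤ #{z ∈ X.toFinset | E x z}} ≤ 2 * (9 * k) := by
    refine hT.card_le_two_mul_of_forall_card_filter_lt fun q hq => ?_
    refine (card_le_card (filter_subset_filter _ (filter_subset _ X.toFinset))).trans_lt ?_
    exact not_le.1 (mem_filter.1 hq).2
  have := card_filter_add_card_filter_not (s := X.toFinset)
    fun x => 9 * k ≤ #{z ∈ X.toFinset | E x z}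
  have := Set.ncard_eq_toFinset_card' X ▸ hM.2.1
  omega

end

/-- A semi-complete digraph containing a `(520k+2, 20k)`-degree tangle or a
`(20k+1, 20k)`-matching tangle topologically contains every simple digraph `H` with
`|V(H)| + |E(H)| ≤ k`. -/
theorem stmt_18 {V W : Type*} [Fintype V] [Fintype W] (E : V → V → Prop)
    (hT : SemiComplete E) (k : ℕ)
    (h : (∃ X : Set V, DegreeTangle E (520 * k + 2) (20 * k) X) ∨
         (∃ X Y : Set V, MatchingTangle E (20 * k + 1) (20 * k) X Y))
    (Eh : W → W → Prop) (hH : ∀ w : W, ¬ Eh w w)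
    (hsize : Fintype.card W + {p : W × W | Eh p.1 p.2}.ncard ≤ k) :
    TopContain Eh E := by
  obtain ⟨S, hkS, hS⟩ : ∃ S : Finset V, k ≤ #S ∧ IsLinked E (3 * k) 3 S := by
    rcases h with ⟨X, hX⟩ | ⟨X, Y, hXY⟩
    exacts [hX.exists_isLinked hT, hXY.exists_isLinked hT]
  exact hS.topContain (by omega) Eh hH (by omega)
end

section
/- Let T be a semi-complete digraph, k a nonnegative integer, and let (X, Y) be a partition of V(T) such that the number of arcs from X to Y is at most k. Then for every x ∈ X and y ∈ Y we have d⁺(x) ≤ d⁺(y) + k + 1. -/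
/-!
Let `x ∈ X`, `y ∈ Y`. An outneighbour `w` of `x` that is not an outneighbour of `y` yields an
arc from `X` to `Y`: if `w ∈ Y` the arc `x → w`, and otherwise `w ∈ X`, `w ≠ y`, so by
semi-completeness the arc `w → y`. Distinct such `w` give distinct arcs, except that `x → y`
may arise twice (as `x → w` with `w = y` and as `w → y` with `w = x`); hence at most `k + 1`
outneighbours of `x` are missing from those of `y`.
-/

theorem Set.ncard_add_ncard_le_of_inter_subset_singleton {α : Type*} {s t u : Set α} {a : α}
    (hu : u.Finite) (hs : s ⊆ u) (ht : t ⊆ u) (hst : s ∩ t ⊆ {a}) :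
    s.ncard + t.ncard ≤ u.ncard + 1 := by
  rw [← Set.ncard_union_add_ncard_inter s t (hu.subset hs) (hu.subset ht)]
  exact add_le_add (Set.ncard_le_ncard (Set.union_subset hs ht) hu)
    ((Set.ncard_le_ncard hst).trans (Set.ncard_singleton a).le)

section Digraph

variable {V : Type*} (E : V → V → Prop) {X Y : Set V} {x y : V}

theorem setOf_rel_subset_union_of_total (htot : ∀ v w : V, v ≠ w → E v w ∨ E w v)
    (hcover : X ∪ Y = Set.univ) (hy : y ∈ Y) :
    {w | E x w} ⊆ {w | E y w} ∪ {w | w ∈ Y ∧ E x w} ∪ {w | w ∈ X ∧ E w y} := by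
  intro w hxw
  by_cases hwY : w ∈ Y
  · exact Or.inl (Or.inr ⟨hwY, hxw⟩)
  have hwX : w ∈ X := (hcover ▸ Set.mem_univ w : w ∈ X ∪ Y).resolve_right hwY
  have hne : w ≠ y := fun h => hwY (h ▸ hy)
  rcases htot w y hne with hwy | hyw
  · exact Or.inr ⟨hwX, hwy⟩
  · exact Or.inl (Or.inl hyw)

theorem ncard_add_ncard_le_ncard_arcs_add_one [Finite V] (hx : x ∈ X) (hy : y ∈ Y) :
    {w | w ∈ Y ∧ E x w}.ncard + {w | w ∈ X ∧ E w y}.ncard ≤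
      {p : V × V | p.1 ∈ X ∧ p.2 ∈ Y ∧ E p.1 p.2}.ncard + 1 := by
  rw [← Set.ncard_image_of_injective {w | w ∈ Y ∧ E x w} (Prod.mk_right_injective x),
    ← Set.ncard_image_of_injective {w | w ∈ X ∧ E w y} (Prod.mk_left_injective y)]
  apply Set.ncard_add_ncard_le_of_inter_subset_singleton (a := (x, y)) (Set.toFinite _)
  · rintro _ ⟨w, ⟨hwY, hxw⟩, rfl⟩
    exact ⟨hx, hwY, hxw⟩
  · rintro _ ⟨w, ⟨hwX, hwy⟩, rfl⟩
    exact ⟨hwX, hy, hwy⟩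
  · rintro _ ⟨⟨w, -, rfl⟩, ⟨w', -, hw'⟩⟩
    obtain ⟨rfl, rfl⟩ := Prod.ext_iff.mp hw'
    rfl

end Digraph

theorem stmt_19_general {V : Type*} [Fintype V] (E : V → V → Prop) (hT : SemiComplete E)
    (k : ℕ) (X Y : Set V) (hcover : X ∪ Y = Set.univ)
    (harcs : {p : V × V | p.1 ∈ X ∧ p.2 ∈ Y ∧ E p.1 p.2}.ncard ≤ k) :
    ∀ x ∈ X, ∀ y ∈ Y, outdeg E x ≤ outdeg E y + k + 1 := by
  intro x hx y hy
  have hcount := ncard_add_ncard_le_ncard_arcs_add_one E hx hy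
  calc outdeg E x
      ≤ ({w | E y w} ∪ {w | w ∈ Y ∧ E x w} ∪ {w | w ∈ X ∧ E w y}).ncard :=
        Set.ncard_le_ncard (setOf_rel_subset_union_of_total E hT.2 hcover hy)
    _ ≤ outdeg E y + {w | w ∈ Y ∧ E x w}.ncard + {w | w ∈ X ∧ E w y}.ncard :=
        (Set.ncard_union_le _ _).trans (Nat.add_le_add_right (Set.ncard_union_le _ _) _)
    _ ≤ outdeg E y + k + 1 := by omega

/-- If `(X, Y)` is a partition of the vertex set of a semi-complete digraph
with at most `k` arcs from `X` to `Y`, then `d⁺(x) ≤ d⁺(y) + k + 1` for all `x ∈ X`,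
`y ∈ Y`. -/
theorem stmt_19 {V : Type*} [Fintype V] (E : V → V → Prop) (hT : SemiComplete E)
    (k : ℕ) (X Y : Set V) (hcover : X ∪ Y = Set.univ) (hdisj : Disjoint X Y)
    (harcs : {p : V × V | p.1 ∈ X ∧ p.2 ∈ Y ∧ E p.1 p.2}.ncard ≤ k) :
    ∀ x ∈ X, ∀ y ∈ Y, outdeg E x ≤ outdeg E y + k + 1 :=
  stmt_19_general E hT k X Y hcover harcs
end
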